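/- Let q be a prime power, k ≤ n/2, and U a k-dimensional 𝔽_q-subspace of 𝔽_{q^n}. Let (ω_2,…,ω_{2k}) be the distance distribution of Orb(U) and set l = max{i ∈ {1,…,k−1} : ω_{2i} ≠ 0}. Then f_U ≤ [(q^{2k}−1) − (|Stab(U)|+2)(q^k − q^{k−l}) − 2(q^{k−l}−1)] / [(q^{k−l}−1)(q−1)]. -/

import Mathlib

noncomputable def shiftSub (K L : Type*) [Field K] [Field L] [Algebra K L]
    (α : L) (U : Submodule K L) : Submodule K L :=
  U.map (LinearMap.mulLeft K α)

noncomputable def orbCode (K L : Type*) [Field K] [Field L] [Algebra K L]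
    (U : Submodule K L) : Set (Submodule K L) :=
  {V | ∃ α : L, α ≠ 0 ∧ V = shiftSub K L α U}

noncomputable def subDist (K L : Type*) [Field K] [Field L] [Algebra K L]
    (k : ℕ) (V W : Submodule K L) : ℕ :=
  2 * (k - Module.finrank K ↥(V ⊓ W))

noncomputable def minDist (K L : Type*) [Field K] [Field L] [Algebra K L]
    (k : ℕ) (C : Set (Submodule K L)) : ℕ :=
  sInf {d : ℕ | ∃ V ∈ C, ∃ W ∈ C, V ≠ W ∧ d = subDist K L k V W}

def stabSet (K L : Type*) [Field K] [Field L] [Algebra K L] (U : Submodule K L) : Set L :=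
  {α : L | α ≠ 0 ∧ shiftSub K L α U = U}

def baseUnits (K L : Type*) [Field K] [Field L] [Algebra K L] : Set L :=
  {α : L | α ≠ 0 ∧ ∃ c : K, algebraMap K L c = α}


noncomputable def fracU (K L : Type*) [Field K] [Field L] [Algebra K L]
    (U : Submodule K L) : ℕ :=
  Set.ncard {P : Submodule K L | ∃ u v : L, u ∈ U ∧ v ∈ U ∧ u ≠ 0 ∧ v ≠ 0 ∧
    P = Submodule.span K {u * v⁻¹}}


noncomputable def omega2 (K L : Type*) [Field K] [Field L] [Algebra K L]
    (k : ℕ) (U : Submodule K L) (i : ℕ) : ℕ :=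
  Set.ncard {V | V ∈ orbCode K L U ∧ subDist K L k U V = 2 * i}

section Helpers
set_option linter.unusedSectionVars false
set_option maxHeartbeats 1000000
variable {K L : Type*} [Field K] [Field L] [Algebra K L] [Fintype K] [Fintype L]

lemma mem_shiftSub_iff {α x : L} {U : Submodule K L} :
    x ∈ shiftSub K L α U ↔ ∃ u ∈ U, α * u = x := by
  simp [shiftSub, Submodule.mem_map]

lemma finrank_shiftSub {α : L} (hα : α ≠ 0) (U : Submodule K L) :
    Module.finrank K (shiftSub K L α U) = Module.finrank K U := by
  have hinj : Function.Injective (LinearMap.mulLeft K α) :=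
    fun a b h => mul_left_cancel₀ hα h
  exact (LinearEquiv.finrank_eq (Submodule.equivMapOfInjective _ hinj U)).symm

lemma card_nz (W : Submodule K L) :
    Nat.card {x : L | x ∈ W ∧ x ≠ 0} = Fintype.card K ^ Module.finrank K W - 1 := by
  have h0 : {x : L | x ∈ W ∧ x ≠ 0} = (W : Set L) \ {0} := by
    ext x; simp [Set.mem_diff, and_comm]
  have hW : Nat.card (W : Set L) = Fintype.card K ^ Module.finrank K W := by
    have : Fintype ↥W := Fintype.ofFinite _
    rw [show Nat.card (W : Set L) = Nat.card W from rfl, Nat.card_eq_fintype_card,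
      Module.card_eq_pow_finrank (K := K) (V := ↥W)]
  rw [h0, Nat.card_coe_set_eq, Set.ncard_diff_singleton_of_mem W.zero_mem,
    ← Nat.card_coe_set_eq, hW]

lemma card_pairs (U : Submodule K L) :
    Nat.card {p : L × L | p.1 ≠ 0 ∧ p.2 ∈ U ⊓ shiftSub K L p.1 U ∧ p.2 ≠ 0}
      = (Fintype.card K ^ Module.finrank K U - 1) ^ 2 := by
  classical
  set S1 : Set L := {x | x ∈ U ∧ x ≠ 0} with hS1
  set A : Set (L × L) := {p | p.1 ≠ 0 ∧ p.2 ∈ U ⊓ shiftSub K L p.1 U ∧ p.2 ≠ 0} with hA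
  set f : L × L → L × L := fun p => (p.2, p.1⁻¹ * p.2) with hf
  have himg : f '' A = S1 ×ˢ S1 := by
    ext ⟨u, v⟩
    constructor
    · rintro ⟨⟨α, w⟩, ⟨hα, hw, hw0⟩, heq⟩
      obtain ⟨hwU, hws⟩ := Submodule.mem_inf.mp hw
      obtain ⟨u', hu', hau⟩ := mem_shiftSub_iff.mp hws
      obtain ⟨h1, h2⟩ := Prod.ext_iff.mp heq
      simp only [hf] at h1 h2
      subst h1; subst h2
      refine ⟨⟨hwU, hw0⟩, ⟨?_, ?_⟩⟩
      · have : α⁻¹ * w = u' := by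
          rw [← show α * u' = w from hau]; exact inv_mul_cancel_left₀ hα u'
        rwa [this]
      · exact mul_ne_zero (inv_ne_zero hα) hw0
    · rintro ⟨⟨hu, hu0⟩, hv, hv0⟩
      have hu0' : u ≠ 0 := hu0
      have hv0' : v ≠ 0 := hv0
      refine ⟨(u * v⁻¹, u), ⟨?_, ?_, hu0⟩, ?_⟩
      · exact mul_ne_zero hu0 (inv_ne_zero hv0)
      · refine Submodule.mem_inf.mpr ⟨hu, mem_shiftSub_iff.mpr ⟨v, hv, by field_simp⟩⟩
      · have hv' : (u * v⁻¹)⁻¹ * u = v := by field_simp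
        simp only [hf, Prod.mk.injEq]
        exact ⟨trivial, hv'⟩
  have hinj : Set.InjOn f A := by
    rintro ⟨α, w⟩ ⟨hα, _, hw0⟩ ⟨α', w'⟩ ⟨hα', _, _⟩ heq
    obtain ⟨h1, h2⟩ := Prod.ext_iff.mp heq
    simp only [hf] at h1 h2
    subst h1
    have : α = α' := by
      have := mul_right_cancel₀ hw0 h2
      exact inv_injective this
    simp [this]
  have h1 : Nat.card A = Nat.card ↥(S1 ×ˢ S1) := by
    rw [Nat.card_coe_set_eq, Nat.card_coe_set_eq, ← himg,
      Set.ncard_image_of_injOn hinj]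
  rw [h1, Nat.card_congr (Equiv.Set.prod S1 S1), Nat.card_prod,
    show S1 = {x : L | x ∈ U ∧ x ≠ 0} from rfl, card_nz, sq]

lemma dim_inf_ge (k l : ℕ) (U : Submodule K L) (hUk : Module.finrank K ↥U = k)
    (hlub : ∀ i ∈ {i : ℕ | 1 ≤ i ∧ i ≤ k - 1 ∧ omega2 K L k U i ≠ 0}, i ≤ l)
    (hk2 : 2 ≤ k) (hlk : l ≤ k - 1)
    {α : L} (hα : α ≠ 0) (hne : shiftSub K L α U ≠ U)
    (hinf : U ⊓ shiftSub K L α U ≠ ⊥) :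
    k - l ≤ Module.finrank K ↥(U ⊓ shiftSub K L α U) := by
  set d := Module.finrank K ↥(U ⊓ shiftSub K L α U) with hd
  have hnt : Nontrivial ↥(U ⊓ shiftSub K L α U) :=
    Submodule.nontrivial_iff_ne_bot.mpr hinf
  have hdpos : 0 < d := Module.finrank_pos
  have hdk : d ≤ k := hUk ▸ Submodule.finrank_mono inf_le_left
  have hdlt : d < k := by
    rcases lt_or_eq_of_le hdk with h | h
    · exact h
    · exfalso
      have h1 : U ⊓ shiftSub K L α U = U :=
        Submodule.eq_of_le_of_finrank_le inf_le_left (by rw [hUk, ← hd, h])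
      have h2 : U ≤ shiftSub K L α U := inf_eq_left.mp h1
      have h3 : U = shiftSub K L α U :=
        Submodule.eq_of_le_of_finrank_le h2 (by rw [finrank_shiftSub hα U])
      exact hne h3.symm
  have hmem : (k - d) ∈ {i : ℕ | 1 ≤ i ∧ i ≤ k - 1 ∧ omega2 K L k U i ≠ 0} := by
    refine ⟨by omega, by omega, ?_⟩
    have hV : shiftSub K L α U ∈
        {V | V ∈ orbCode K L U ∧ subDist K L k U V = 2 * (k - d)} :=
      ⟨⟨α, hα, rfl⟩, by rw [subDist, hd]⟩
    have hfin : Set.Finite {V | V ∈ orbCode K L U ∧ subDist K L k U V = 2 * (k - d)} :=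
      Set.toFinite _
    exact ((Set.ncard_pos hfin).mpr ⟨_, hV⟩).ne'
  have := hlub _ hmem
  omega

end Helpers

set_option maxHeartbeats 2000000 in
theorem statement_5 (q n k l : ℕ) (hq : IsPrimePow q) (hkn : 2 * k ≤ n)
    (K L : Type*) [Field K] [Field L] [Algebra K L] [Fintype K] [Fintype L]
    (hK : Fintype.card K = q) (hL : Fintype.card L = q ^ n)
    (U : Submodule K L) (hUk : Module.finrank K ↥U = k)
    (hl : IsGreatest {i : ℕ | 1 ≤ i ∧ i ≤ k - 1 ∧ omega2 K L k U i ≠ 0} l) :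
    fracU K L U * ((q ^ (k - l) - 1) * (q - 1))
        + (Set.ncard (stabSet K L U) + 2) * (q ^ k - q ^ (k - l))
        + 2 * (q ^ (k - l) - 1)
      ≤ q ^ (2 * k) - 1 := by
  classical
  obtain ⟨⟨hl1, hlk1, _⟩, hlub⟩ := hl
  have hq2 : 2 ≤ q := hq.two_le
  have hk2 : 2 ≤ k := by omega
  have hUne : U ≠ ⊥ := by
    intro h
    rw [h, finrank_bot] at hUk
    omega
  -- the sets
  set S : Set L := {α : L | α ≠ 0 ∧ U ⊓ shiftSub K L α U ≠ ⊥} with hSdef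
  set A : Set (L × L) := {p | p.1 ≠ 0 ∧ p.2 ∈ U ⊓ shiftSub K L p.1 U ∧ p.2 ≠ 0} with hAdef
  set Pt : Set (Submodule K L) := {P | ∃ u v : L, u ∈ U ∧ v ∈ U ∧ u ≠ 0 ∧ v ≠ 0 ∧
    P = Submodule.span K {u * v⁻¹}} with hPtdef
  have hAfin : A.Finite := Set.toFinite _
  have hSfin : S.Finite := Set.toFinite _
  have hStfin : (stabSet K L U).Finite := Set.toFinite _
  have hPtfin : Pt.Finite := Set.toFinite _
  set AF := hAfin.toFinset with hAF
  set SF := hSfin.toFinset with hSF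
  set StF := hStfin.toFinset with hStF
  set PtF := hPtfin.toFinset with hPtF
  -- Stab ⊆ S
  have hsub : StF ⊆ SF := by
    intro α hα
    rw [hStF, Set.Finite.mem_toFinset] at hα
    rw [hSF, Set.Finite.mem_toFinset]
    obtain ⟨h0, heq⟩ := hα
    exact ⟨h0, by rw [heq, inf_idem]; exact hUne⟩
  -- fiber cardinality of A over first coordinate
  have hfib : ∀ α : L, α ≠ 0 → (AF.filter (fun p => p.1 = α)).card
      = Fintype.card K ^ Module.finrank K ↥(U ⊓ shiftSub K L α U) - 1 := by
    intro α hα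
    have hWfin : ({x : L | x ∈ U ⊓ shiftSub K L α U ∧ x ≠ 0}).Finite := Set.toFinite _
    rw [show (AF.filter (fun p => p.1 = α)).card = hWfin.toFinset.card from ?_,
      ← Set.ncard_eq_toFinset_card _ hWfin, ← Nat.card_coe_set_eq, card_nz]
    refine Finset.card_nbij' (fun p => p.2) (fun w => (α, w)) ?_ ?_ ?_ ?_
    · intro p hp
      rw [Finset.mem_coe, Finset.mem_filter, hAF, Set.Finite.mem_toFinset] at hp
      obtain ⟨⟨_, h2, h3⟩, h4⟩ := hp
      rw [Finset.mem_coe, Set.Finite.mem_toFinset]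
      exact ⟨h4 ▸ h2, h3⟩
    · intro w hw
      rw [Finset.mem_coe, Set.Finite.mem_toFinset] at hw
      rw [Finset.mem_coe, Finset.mem_filter, hAF, Set.Finite.mem_toFinset]
      exact ⟨⟨hα, hw.1, hw.2⟩, rfl⟩
    · intro p hp
      rw [Finset.mem_coe, Finset.mem_filter] at hp
      exact Prod.ext hp.2.symm rfl
    · intro w _
      rfl
  -- total count
  have hAcard : AF.card = (q ^ k - 1) ^ 2 := by
    rw [hAF, ← Set.ncard_eq_toFinset_card _ hAfin, ← Nat.card_coe_set_eq, hAdef,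
      card_pairs, hK, hUk]
  -- fiberwise decomposition
  have hdecomp : AF.card = ∑ α ∈ SF, (AF.filter (fun p => p.1 = α)).card := by
    refine Finset.card_eq_sum_card_fiberwise ?_
    intro p hp
    rw [hAF, Finset.mem_coe, Set.Finite.mem_toFinset] at hp
    rw [hSF, Finset.mem_coe, Set.Finite.mem_toFinset]
    exact ⟨hp.1, Submodule.ne_bot_iff _ |>.mpr ⟨p.2, hp.2.1, hp.2.2⟩⟩
  -- bound for stab fibers
  have hstabfib : ∀ α ∈ StF, (AF.filter (fun p => p.1 = α)).card = q ^ k - 1 := by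
    intro α hα
    rw [hStF, Set.Finite.mem_toFinset] at hα
    obtain ⟨h0, heq⟩ := hα
    rw [hfib α h0]
    congr 1
    rw [heq, inf_idem, hUk, hK]
  -- bound for non-stab fibers
  have hotherfib : ∀ α ∈ SF \ StF,
      q ^ (k - l) - 1 ≤ (AF.filter (fun p => p.1 = α)).card := by
    intro α hα
    rw [Finset.mem_sdiff, hSF, hStF, Set.Finite.mem_toFinset, Set.Finite.mem_toFinset] at hα
    obtain ⟨⟨h0, hinf⟩, hnst⟩ := hα
    have hne : shiftSub K L α U ≠ U := fun h => hnst ⟨h0, h⟩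
    have hdim := dim_inf_ge k l U hUk hlub hk2 hlk1 h0 hne hinf
    rw [hfib α h0, hK]
    have : q ^ (k - l) ≤ q ^ Module.finrank K ↥(U ⊓ shiftSub K L α U) :=
      Nat.pow_le_pow_right (by omega) hdim
    omega
  -- key inequality
  have hkey : StF.card * (q ^ k - 1) + (SF \ StF).card * (q ^ (k - l) - 1)
      ≤ (q ^ k - 1) ^ 2 := by
    rw [← hAcard, hdecomp, ← Finset.sum_sdiff hsub]
    have h1 : ∑ α ∈ StF, (AF.filter (fun p => p.1 = α)).card = StF.card * (q ^ k - 1) := by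
      rw [Finset.sum_congr rfl hstabfib, Finset.sum_const, smul_eq_mul]
    have h2 : (SF \ StF).card * (q ^ (k - l) - 1)
        ≤ ∑ α ∈ SF \ StF, (AF.filter (fun p => p.1 = α)).card := by
      calc (SF \ StF).card * (q ^ (k - l) - 1)
          = ∑ _α ∈ SF \ StF, (q ^ (k - l) - 1) := by
            rw [Finset.sum_const, smul_eq_mul]
        _ ≤ _ := Finset.sum_le_sum hotherfib
    omega
  -- S card = fracU * (q - 1)
  have hScard : SF.card = PtF.card * (q - 1) := by
    have hmap : ∀ α ∈ SF, Submodule.span K {α} ∈ PtF := by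
      intro α hα
      rw [hSF, Set.Finite.mem_toFinset] at hα
      obtain ⟨h0, hinf⟩ := hα
      obtain ⟨w, hw, hw0⟩ := (Submodule.ne_bot_iff _).mp hinf
      obtain ⟨hwU, hws⟩ := Submodule.mem_inf.mp hw
      obtain ⟨v, hv, hav⟩ := mem_shiftSub_iff.mp hws
      have hv0 : v ≠ 0 := by rintro rfl; rw [mul_zero] at hav; exact hw0 hav.symm
      have hα' : α = w * v⁻¹ := by
        rw [← hav]; field_simp
      rw [hPtF, Set.Finite.mem_toFinset, hPtdef]
      exact ⟨w, v, hwU, hv, hw0, hv0, by rw [hα']⟩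
    rw [Finset.card_eq_sum_card_fiberwise hmap]
    have hfib2 : ∀ P ∈ PtF, (SF.filter (fun α => Submodule.span K {α} = P)).card = q - 1 := by
      intro P hP
      rw [hPtF, Set.Finite.mem_toFinset, hPtdef] at hP
      obtain ⟨u, v, hu, hv, hu0, hv0, rfl⟩ := hP
      have huv0 : u * v⁻¹ ≠ 0 := mul_ne_zero hu0 (inv_ne_zero hv0)
      have hrank1 : Module.finrank K ↥(Submodule.span K {u * v⁻¹}) = 1 :=
        finrank_span_singleton huv0
      have hWfin : ({x : L | x ∈ Submodule.span K {u * v⁻¹} ∧ x ≠ 0}).Finite := Set.toFinite _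
      rw [show (SF.filter (fun α => Submodule.span K {α} = Submodule.span K {u * v⁻¹})).card
          = hWfin.toFinset.card from ?_,
        ← Set.ncard_eq_toFinset_card _ hWfin, ← Nat.card_coe_set_eq, card_nz, hrank1,
        pow_one, hK]
      refine Finset.card_nbij' (fun α => α) (fun β => β) ?_ ?_ ?_ ?_
      · intro α hα
        rw [Finset.mem_coe, Finset.mem_filter, hSF, Set.Finite.mem_toFinset] at hα
        rw [Finset.mem_coe, Set.Finite.mem_toFinset]
        exact ⟨hα.2 ▸ Submodule.mem_span_singleton_self α, hα.1.1⟩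
      · intro β hβ
        rw [Finset.mem_coe, Set.Finite.mem_toFinset] at hβ
        obtain ⟨hβP, hβ0⟩ := hβ
        obtain ⟨c, hc⟩ := Submodule.mem_span_singleton.mp hβP
        have hc0 : c ≠ 0 := by rintro rfl; rw [zero_smul] at hc; exact hβ0 hc.symm
        have hspan : Submodule.span K {β} = Submodule.span K {u * v⁻¹} := by
          refine Submodule.eq_of_le_of_finrank_le ?_ ?_
          · rw [Submodule.span_le, Set.singleton_subset_iff]; exact hβP
          · rw [hrank1, finrank_span_singleton hβ0]
        have hβv : β * v = c • u := by
          rw [← hc, smul_mul_assoc, inv_mul_cancel_right₀ hv0]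
        have hcu0 : c • u ≠ 0 := smul_ne_zero hc0 hu0
        rw [Finset.mem_coe, Finset.mem_filter, hSF, Set.Finite.mem_toFinset]
        refine ⟨⟨hβ0, (Submodule.ne_bot_iff _).mpr ⟨c • u, ?_, hcu0⟩⟩, hspan⟩
        exact Submodule.mem_inf.mpr ⟨Submodule.smul_mem _ c hu,
          mem_shiftSub_iff.mpr ⟨v, hv, hβv⟩⟩
      · intro α _; rfl
      · intro β _; rfl
    rw [Finset.sum_congr rfl hfib2, Finset.sum_const, smul_eq_mul]
  -- translate to the statement quantities
  have hfrac : fracU K L U = PtF.card := by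
    rw [fracU, hPtF, Set.ncard_eq_toFinset_card _ hPtfin]
  have hstabcard : Set.ncard (stabSet K L U) = StF.card := by
    rw [hStF, Set.ncard_eq_toFinset_card _ hStfin]
  -- final arithmetic
  have hcSF : (SF \ StF).card + StF.card = SF.card := Finset.card_sdiff_add_card_eq_card hsub
  set s := StF.card
  set t := (SF \ StF).card
  have hfr : fracU K L U * (q - 1) = s + t := by
    rw [hfrac]
    omega
  have hA1 : 1 ≤ q ^ (k - l) := Nat.one_le_pow _ _ (by omega)
  have hAB : q ^ (k - l) ≤ q ^ k := Nat.pow_le_pow_right (by omega) (by omega)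
  have hB1 : 1 ≤ q ^ k := Nat.one_le_pow _ _ (by omega)
  have hq1 : 1 ≤ q := by omega
  have h2k : q ^ (2 * k) = q ^ k * q ^ k := by rw [two_mul, pow_add]
  set A' := q ^ (k - l)
  set B' := q ^ k
  rw [h2k]
  have hBB : 1 ≤ B' * B' := Nat.one_le_iff_ne_zero.mpr (by positivity)
  zify [hA1, hAB, hq1, hBB, hB1] at hkey hfr ⊢
  have hrw : (fracU K L U : ℤ) * ((A' - 1) * (q - 1)) = (s + t) * (A' - 1) := by
    rw [show (fracU K L U : ℤ) * ((A' - 1) * (q - 1)) =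
      (fracU K L U * (q - 1)) * (A' - 1) from by ring, hfr]
  rw [hrw]
  nlinarith [hkey]
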